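/- There exist a linear schema S, a variable v, and an executable terminating path ρ through S such that S has two distinct minimal (ρ,{v})-path-faithful dynamic end slices S₁ and S₂ (minimal with respect to inclusion of retained function and predicate symbols among (ρ,{v})-dynamic end slices); hence minimal dynamic slices and minimal path-faithful dynamic slices of linear schemas need not be unique. In particular, for the schema S of Figure 4 of the paper — while P(v) { if Q(v) then { if q(v) then { x := g_good(); v := G_good(x,v); } else { x := g_bad(); v := G_bad(x,v); }; if s₁(v) then x := g₁(); if s₂(v) then x := g₂(); if t(x) then v := H(v); } else skip; v := J(v); } — with the path ρ entering the body of P five times (1st: through g_good and H, neither gᵢ; 2nd: through g_good, g₁ and H, not g₂; 3rd: through g_good, g₂ and H, not g₁; 4th: through g_bad, g₁, g₂ and H; 5th: through ⟨Q,false⟩), the quotients S₁ and S₂ obtained by deleting respectively the if statement guarded by s₂ and by s₁ are both minimal (ρ,{v})-path-faithful dynamic end slices of S, and S₁ ≠ S₂. -/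

import Mathlib

namespace SchemaSlicing

/- Function symbols, predicate symbols, variables and labels are drawn from
   fixed infinite sets; we model each by ℕ. Arities are implicit: each
   occurrence of a symbol carries the list of its arguments. -/
abbrev Var := ℕ
abbrev Fn := ℕ
abbrev Pn := ℕ
abbrev Label := ℕ

/-- Structured program schemas. `loop` is the while-construct. -/
inductive Schema : Type where
  | skip : Schema
  | label : Label → Schema
  | assign : Var → Fn → List Var → Schema
  | seq : Schema → Schema → Schema
  | ite : Pn → List Var → Schema → Schema → Schema
  | loop : Pn → List Var → Schema → Schema
  deriving DecidableEq

/-- Letters of the alphabet L(S): labels, assignment letters ⟨y:=f(x)⟩ and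
    predicate letters ⟨p(x),Z⟩. -/
inductive Letter : Type where
  | lab : Label → Letter
  | asgn : Var → Fn → List Var → Letter
  | pred : Pn → List Var → Bool → Letter
  deriving DecidableEq

/-- Symbols: function symbols, predicate symbols and labels. -/
inductive Sym : Type where
  | fn : Fn → Sym
  | pn : Pn → Sym
  | lab : Label → Sym
  deriving DecidableEq

/-- The list of occurrences of function symbols, predicate symbols and labels in a schema. -/
def Schema.syms : Schema → List Sym
  | .skip => []
  | .label l => [Sym.lab l]
  | .assign _ f _ => [Sym.fn f]
  | .seq S₁ S₂ => S₁.syms ++ S₂.syms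
  | .ite p _ S₁ S₂ => Sym.pn p :: (S₁.syms ++ S₂.syms)
  | .loop q _ T => Sym.pn q :: T.syms

/-- A schema is linear if no function symbol, predicate symbol or label occurs
    more than once in it. -/
def Schema.Linear (S : Schema) : Prop := S.syms.Nodup

/-- Π(S), the set of terminating paths through S. -/
inductive Paths : Schema → List Letter → Prop where
  | skip : Paths Schema.skip []
  | label (l : Label) : Paths (Schema.label l) [Letter.lab l]
  | assign (y : Var) (f : Fn) (xs : List Var) :
      Paths (Schema.assign y f xs) [Letter.asgn y f xs]
  | seq {S₁ S₂ w₁ w₂} : Paths S₁ w₁ → Paths S₂ w₂ → Paths (Schema.seq S₁ S₂) (w₁ ++ w₂)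
  | iteTrue {p xs S₁ S₂ w} : Paths S₁ w →
      Paths (Schema.ite p xs S₁ S₂) (Letter.pred p xs true :: w)
  | iteFalse {p xs S₁ S₂ w} : Paths S₂ w →
      Paths (Schema.ite p xs S₁ S₂) (Letter.pred p xs false :: w)
  | loopFalse (q : Pn) (xs : List Var) (T : Schema) :
      Paths (Schema.loop q xs T) [Letter.pred q xs false]
  | loopTrue {q xs T w ws} : Paths T w → Paths (Schema.loop q xs T) ws →
      Paths (Schema.loop q xs T) (Letter.pred q xs true :: (w ++ ws))

/-- ρ ∈ pre(Π(S)): ρ is a (finite) path through S.  (Every finite path through S,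
    including every finite prefix of an infinite path, is a prefix of a terminating path.) -/
def PathPrefix (S : Schema) (ρ : List Letter) : Prop := ∃ τ, Paths S τ ∧ ρ <+: τ

/-- `IsQuotient S' S`: S' is obtained from S by deleting zero or more statements. -/
inductive IsQuotient : Schema → Schema → Prop where
  | skip (S : Schema) : IsQuotient Schema.skip S
  | refl (S : Schema) : IsQuotient S S
  | seq {S₁' S₁ S₂' S₂} : IsQuotient S₁' S₁ → IsQuotient S₂' S₂ →
      IsQuotient (Schema.seq S₁' S₂') (Schema.seq S₁ S₂)
  | loop {q xs T' T} : IsQuotient T' T → IsQuotient (Schema.loop q xs T') (Schema.loop q xs T)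
  | ite {p xs T₁ S₁ T₂ S₂} : IsQuotient T₁ S₁ → IsQuotient T₂ S₂ →
      IsQuotient (Schema.ite p xs T₁ T₂) (Schema.ite p xs S₁ S₂)

/-- The symbol (function symbol, predicate symbol or label) of a letter. -/
def Letter.sym : Letter → Sym
  | .lab l => Sym.lab l
  | .asgn _ f _ => Sym.fn f
  | .pred p _ _ => Sym.pn p

/-- proj_{S'}(ρ): delete from ρ all letters whose function or predicate symbols,
    or labels, do not occur in S'. -/
def proj (S' : Schema) (ρ : List Letter) : List Letter :=
  ρ.filter (fun m => decide (m.sym ∈ S'.syms))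

/-- An interpretation over a domain D. -/
structure Interp (D : Type) where
  fn : Fn → List D → D
  pn : Pn → List D → Bool

/-- One execution step on (non-⊥) states; predicate letters and labels do not change the state. -/
def execLetter {D : Type} (i : Interp D) (d : Var → D) : Letter → (Var → D)
  | .asgn y f xs => Function.update d y (i.fn f (xs.map d))
  | _ => d

/-- M[schema(σ)]^i_d : the state after executing the assignments of the word σ from d. -/
def execWord {D : Type} (i : Interp D) (d : Var → D) (σ : List Letter) : Var → D :=
  σ.foldl (execLetter i) d

/-- ρ is consistent with (i,d): every predicate letter in ρ is evaluated by i in accordance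
    with the sequence of assignments preceding it. -/
def Consistent {D : Type} (i : Interp D) (d : Var → D) (ρ : List Letter) : Prop :=
  ∀ σ p xs Z, (σ ++ [Letter.pred p xs Z]) <+: ρ → i.pn p (xs.map (execWord i d σ)) = Z

/-- `ρ` is a finite prefix of the path π(S,i,d). -/
def PrefixOfPi {D : Type} (i : Interp D) (d : Var → D) (S : Schema) (ρ : List Letter) : Prop :=
  PathPrefix S ρ ∧ Consistent i d ρ

/-- The set of finite prefixes of π(S,i,d); this set determines the
    (possibly infinite) word π(S,i,d) uniquely. -/
def PiPrefixes {D : Type} (i : Interp D) (d : Var → D) (S : Schema) : Set (List Letter) :=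
  {ρ | PrefixOfPi i d S ρ}

open Classical in
/-- The final state M[S]^i_d; `none` represents ⊥ (non-termination). -/
noncomputable def finalState {D : Type} (i : Interp D) (d : Var → D) (S : Schema) :
    Option (Var → D) :=
  if h : ∃ ρ, Paths S ρ ∧ Consistent i d ρ then some (execWord i d h.choose) else none

/-- The Herbrand domain Term(F,V). -/
inductive Tm : Type where
  | var : Var → Tm
  | app : Fn → List Tm → Tm

/-- A Herbrand interpretation: function symbols act as term constructors. -/
def Interp.IsHerbrand (j : Interp Tm) : Prop := ∀ f ts, j.fn f ts = Tm.app f ts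

/-- The natural state e. -/
def natState : Var → Tm := Tm.var

/-- A fixed Herbrand interpretation (the predicate part is irrelevant for executing
    assignments). -/
def hInterp : Interp Tm := ⟨fun f ts => Tm.app f ts, fun _ _ => true⟩

/-- M[σ]_e : the Herbrand state after executing the assignments of σ from the natural state. -/
def hExec (σ : List Letter) : Var → Tm := execWord hInterp natState σ

/-- p(t) = Y is a consequence of μ. -/
def Consequence (μ : List Letter) (p : Pn) (ts : List Tm) (Y : Bool) : Prop :=
  ∃ μ' xs, (μ' ++ [Letter.pred p xs Y]) <+: μ ∧ xs.map (hExec μ') = ts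

/-- ρ is executable: ρ is a prefix of π(S,i,d) for some domain, interpretation and state. -/
def Executable (S : Schema) (ρ : List Letter) : Prop :=
  ∃ (D : Type) (i : Interp D) (d : Var → D), PrefixOfPi i d S ρ

/-- ρ (through S) and ρ' (through S') are compatible: for some domain, interpretation i
    and state d they are prefixes of π(S,i,d) and π(S',i,d) respectively. -/
def Compatible (S : Schema) (ρ : List Letter) (S' : Schema) (ρ' : List Letter) : Prop :=
  ∃ (D : Type) (i : Interp D) (d : Var → D), PrefixOfPi i d S ρ ∧ PrefixOfPi i d S' ρ'

/-- `Sub T S`: T occurs as a subschema of S. -/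
inductive Sub : Schema → Schema → Prop where
  | refl (S : Schema) : Sub S S
  | seqL {T S₁ S₂} : Sub T S₁ → Sub T (Schema.seq S₁ S₂)
  | seqR {T S₁ S₂} : Sub T S₂ → Sub T (Schema.seq S₁ S₂)
  | iteT {T p xs S₁ S₂} : Sub T S₁ → Sub T (Schema.ite p xs S₁ S₂)
  | iteF {T p xs S₁ S₂} : Sub T S₂ → Sub T (Schema.ite p xs S₁ S₂)
  | loop {T q xs B} : Sub T B → Sub T (Schema.loop q xs B)

/-- Simple l-reductions of paths through S. -/
inductive SimpleRed (S : Schema) (l : Label) : List Letter → List Letter → Prop where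
  | loopRed {p xs B σ α γ} :
      Sub (Schema.loop p xs B) S → Paths B σ → Sym.lab l ∉ B.syms →
      SimpleRed S l (α ++ [Letter.pred p xs true] ++ σ ++ [Letter.pred p xs false] ++ γ)
                    (α ++ [Letter.pred p xs false] ++ γ)
  | iteRed {p xs S₁ S₂ σ α γ} {Z : Bool} :
      Sub (Schema.ite p xs S₁ S₂) S → Paths (if Z then S₁ else S₂) σ →
      (if Z then S₂ else S₁) = Schema.skip →
      Sym.lab l ∉ S₁.syms → Sym.lab l ∉ S₂.syms →
      SimpleRed S l (α ++ [Letter.pred p xs Z] ++ σ ++ γ)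
                    (α ++ [Letter.pred p xs (!Z)] ++ γ)

/-- ρ is l-reducible to ρ': zero or more simple l-reductions. -/
def Reducible (S : Schema) (l : Label) : List Letter → List Letter → Prop :=
  Relation.ReflTransGen (SimpleRed S l)

/-- maxpre(σ,σ') : the maximal common prefix of two words. -/
def maxpre : List Letter → List Letter → List Letter
  | a :: as, b :: bs => if a = b then a :: maxpre as bs else []
  | _, _ => []

/-- The sequence of function and predicate symbols through which a path passes. -/
def symSeq (ρ : List Letter) : List Sym :=
  ρ.filterMap fun m => match m with
    | Letter.asgn _ f _ => some (Sym.fn f)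
    | Letter.pred p _ _ => some (Sym.pn p)
    | Letter.lab _ => none

/-- S' (a quotient of S containing l) is a (ρl,V)-path-faithful dynamic slice of S:
    (1) every variable of V defines the same term after proj_{S'}(ρ) as after ρ, and
    (2) every maximal path through S' compatible with ρ has proj_{S'}(ρ) as a prefix
        (equivalently: whenever ρ is a prefix of π(S,i,d), proj_{S'}(ρ) is a prefix
        of π(S',i,d)). -/
def IsPFDS (S : Schema) (ρ : List Letter) (l : Label) (V : Set Var) (S' : Schema) : Prop :=
  (∀ v ∈ V, hExec (proj S' ρ) v = hExec ρ v) ∧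
  ∀ (D : Type) (i : Interp D) (d : Var → D),
    PrefixOfPi i d S ρ → PrefixOfPi i d S' (proj S' ρ)

/-- S' (a quotient of S containing l) is a (ρl,V)-dynamic slice of S: every maximal path
    through S' compatible with ρ has a prefix ρ' to which proj_{S'}(ρ) is l-reducible and
    such that every variable of V defines the same term after ρ' as after ρ. -/
def IsDS (S : Schema) (ρ : List Letter) (l : Label) (V : Set Var) (S' : Schema) : Prop :=
  ∀ (D : Type) (i : Interp D) (d : Var → D), PrefixOfPi i d S ρ →
    ∃ ρ', PrefixOfPi i d S' ρ' ∧ Reducible S' l (proj S' ρ) ρ' ∧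
      ∀ v ∈ V, hExec ρ' v = hExec ρ v

/-- T' is a (ρ,V)-path-faithful dynamic end slice of T
    (S = T l with a label l at the end, S' = T' l). -/
def IsPFDSEnd (T : Schema) (ρ : List Letter) (V : Set Var) (T' : Schema) : Prop :=
  IsPFDS (Schema.seq T (Schema.label 0)) ρ 0 V (Schema.seq T' (Schema.label 0))

/-- T' is a (ρ,V)-dynamic end slice of T. -/
def IsDSEnd (T : Schema) (ρ : List Letter) (V : Set Var) (T' : Schema) : Prop :=
  IsDS (Schema.seq T (Schema.label 0)) ρ 0 V (Schema.seq T' (Schema.label 0))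

/-- The set of function and predicate symbols of a schema. -/
def fpsyms (T : Schema) : Set Sym := {s | s ∈ T.syms ∧ ∀ l : Label, s ≠ Sym.lab l}

/-- T is a minimal (ρ,V)-path-faithful dynamic end slice of S: it is a path-faithful
    dynamic end slice, and no quotient of S with a strictly smaller set of function and
    predicate symbols is a (ρ,V)-dynamic end slice of S. -/
def MinimalPFDSEnd (S : Schema) (ρ : List Letter) (V : Set Var) (T : Schema) : Prop :=
  IsPFDSEnd S ρ V T ∧
  ∀ T', IsQuotient T' S → fpsyms T' ⊂ fpsyms T → ¬ IsDSEnd S ρ V T'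

/- The schema of Figure 4 of the paper.
   Variables: v = 0, x = 1.
   Function symbols: g_good = 0, G_good = 1, g_bad = 2, G_bad = 3, g₁ = 4, g₂ = 5,
                     H = 6, J = 7.
   Predicate symbols: P = 0, Q = 1, q = 2, s₁ = 3, s₂ = 4, t = 5. -/

/-- if q(v) then { x := g_good(); v := G_good(x,v); }
             else { x := g_bad(); v := G_bad(x,v); } -/
def fig4Inner : Schema :=
  Schema.ite 2 [0]
    (Schema.seq (Schema.assign 1 0 []) (Schema.assign 0 1 [1, 0]))
    (Schema.seq (Schema.assign 1 2 []) (Schema.assign 0 3 [1, 0]))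

/-- if s₁(v) then x := g₁(); -/
def fig4S1If : Schema := Schema.ite 3 [0] (Schema.assign 1 4 []) Schema.skip
/-- if s₂(v) then x := g₂(); -/
def fig4S2If : Schema := Schema.ite 4 [0] (Schema.assign 1 5 []) Schema.skip
/-- if t(x) then v := H(v); -/
def fig4TIf : Schema := Schema.ite 5 [1] (Schema.assign 0 6 [0]) Schema.skip

/-- The Figure 4 schema, built from a given pair of middle if-statements. -/
def fig4With (s1 s2 : Schema) : Schema :=
  Schema.loop 0 [0]
    (Schema.seq
      (Schema.ite 1 [0]
        (Schema.seq fig4Inner (Schema.seq s1 (Schema.seq s2 fig4TIf)))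
        Schema.skip)
      (Schema.assign 0 7 [0]))

/-- The schema S of Figure 4. -/
def fig4S : Schema := fig4With fig4S1If fig4S2If
/-- S₁: S with the if statement guarded by s₂ deleted. -/
def fig4Sa : Schema := fig4With fig4S1If Schema.skip
/-- S₂: S with the if statement guarded by s₁ deleted. -/
def fig4Sb : Schema := fig4With Schema.skip fig4S2If

/-- ⟨q,true⟩⟨g_good⟩⟨G_good⟩ -/
def fig4Good : List Letter :=
  [Letter.pred 2 [0] true, Letter.asgn 1 0 [], Letter.asgn 0 1 [1, 0]]
/-- ⟨q,false⟩⟨g_bad⟩⟨G_bad⟩ -/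
def fig4Bad : List Letter :=
  [Letter.pred 2 [0] false, Letter.asgn 1 2 [], Letter.asgn 0 3 [1, 0]]
def fig4s1T : List Letter := [Letter.pred 3 [0] true, Letter.asgn 1 4 []]
def fig4s1F : List Letter := [Letter.pred 3 [0] false]
def fig4s2T : List Letter := [Letter.pred 4 [0] true, Letter.asgn 1 5 []]
def fig4s2F : List Letter := [Letter.pred 4 [0] false]
/-- ⟨t,true⟩⟨H⟩ -/
def fig4tT : List Letter := [Letter.pred 5 [1] true, Letter.asgn 0 6 [0]]
/-- ⟨J⟩ -/
def fig4J : List Letter := [Letter.asgn 0 7 [0]]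

/-- A pass of ρ through the body of P, entering the body of Q. -/
def fig4Pass (inner s1 s2 : List Letter) : List Letter :=
  [Letter.pred 0 [0] true, Letter.pred 1 [0] true] ++ inner ++ s1 ++ s2 ++ fig4tT ++ fig4J

/-- The path ρ of Section 5: it enters the body of P five times.
    1st: through g_good and H, not through either gᵢ.
    2nd: through g_good, g₁ and H, not g₂.
    3rd: through g_good, g₂ and H, not g₁.
    4th: through g_bad, g₁, g₂ and H.
    5th: through ⟨Q,false⟩. -/
def fig4Rho : List Letter :=
  fig4Pass fig4Good fig4s1F fig4s2F ++
  fig4Pass fig4Good fig4s1T fig4s2F ++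
  fig4Pass fig4Good fig4s1F fig4s2T ++
  fig4Pass fig4Bad fig4s1T fig4s2T ++
  ([Letter.pred 0 [0] true, Letter.pred 1 [0] false] ++ fig4J) ++
  [Letter.pred 0 [0] false]

/-!
Path-faithfulness is checked on Herbrand terms: under every interpretation, a path is
consistent as soon as the constraints `p(t) = Z` read off its predicate letters (arguments
evaluated as Herbrand terms) hold, and each such constraint of the projection of `ρ` onto
`S₁` or `S₂` already occurs in `ρ`.

For minimality, a dynamic end slice must keep every function symbol of the final value of `v`
(`g_good`, `G_good`, `g_bad`, `G_bad`, `H`, `J`), since a path builds terms only from the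
function symbols it passes through; hence it keeps `P`, `Q`, `q` and `t` as well, and a smaller
quotient of `S₁` must drop `g₁`. Under an interpretation whose predicates on `v` count the
passes and where `t` rejects only `g_bad()`, the run of such a quotient skips `H` on the fourth
pass, so `v` never reaches its final value; every consistent path is a prefix of that run,
because two terminating paths can only part at a predicate letter. The finitely many
quotients of `S` are enumerated.
-/

mutual
def Tm.decEq : (a b : Tm) → Decidable (a = b)
  | .var u, .var v =>
    if h : u = v then isTrue (h ▸ rfl) else isFalse fun e => h (Tm.var.inj e)
  | .var _, .app _ _ => isFalse Tm.noConfusion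
  | .app _ _, .var _ => isFalse Tm.noConfusion
  | .app f ts, .app g us =>
    if hf : f = g then
      match Tm.decEqList ts us with
      | isTrue h => isTrue (hf ▸ h ▸ rfl)
      | isFalse h => isFalse fun e => h (Tm.app.inj e).2
    else isFalse fun e => hf (Tm.app.inj e).1
def Tm.decEqList : (ts us : List Tm) → Decidable (ts = us)
  | [], [] => isTrue rfl
  | [], _ :: _ => isFalse (List.cons_ne_nil _ _).symm
  | _ :: _, [] => isFalse (List.cons_ne_nil _ _)
  | t :: ts, u :: us =>
    match Tm.decEq t u, Tm.decEqList ts us with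
    | isTrue h, isTrue h' => isTrue (h ▸ h' ▸ rfl)
    | isFalse h, _ => isFalse fun e => h (List.cons.inj e).1
    | _, isFalse h' => isFalse fun e => h' (List.cons.inj e).2
end

instance : DecidableEq Tm := Tm.decEq

mutual
def Tm.fns : Tm → List Fn
  | .var _ => []
  | .app f ts => f :: Tm.fnsList ts
def Tm.fnsList : List Tm → List Fn
  | [] => []
  | t :: ts => t.fns ++ Tm.fnsList ts
end

theorem Tm.fns_app (f : Fn) (ts : List Tm) : (Tm.app f ts).fns = f :: ts.flatMap Tm.fns := by
  suffices ∀ ts : List Tm, Tm.fnsList ts = ts.flatMap Tm.fns by simp [Tm.fns, this]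
  intro ts
  induction ts with
  | nil => simp [Tm.fnsList]
  | cons t ts ih => simp [Tm.fnsList, ih]

section Eval

variable {D : Type} (i : Interp D) (d : Var → D)

mutual
def Tm.eval : Tm → D
  | .var x => d x
  | .app f ts => i.fn f (Tm.evalList ts)
def Tm.evalList : List Tm → List D
  | [] => []
  | t :: ts => t.eval :: Tm.evalList ts
end

theorem Tm.eval_app (f : Fn) (ts : List Tm) :
    (Tm.app f ts).eval i d = i.fn f (ts.map (Tm.eval i d)) := by
  suffices ∀ ts : List Tm, Tm.evalList i d ts = ts.map (Tm.eval i d) by simp [Tm.eval, this]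
  intro ts
  induction ts with
  | nil => simp [Tm.evalList]
  | cons t ts ih => simp [Tm.evalList, ih]

theorem Tm.eval_comp_natState : Tm.eval i d ∘ natState = d := rfl

theorem eval_comp_execLetter (s : Var → Tm) (m : Letter) :
    Tm.eval i d ∘ execLetter hInterp s m = execLetter i (Tm.eval i d ∘ s) m := by
  cases m with
  | asgn y f xs =>
    funext x
    by_cases hx : x = y
    · subst hx; simp [execLetter, hInterp, Tm.eval_app, List.map_map]
    · simp [execLetter, hx]
  | _ => rfl

end Eval

section Consistency

variable {D : Type} {i : Interp D} {d : Var → D}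

theorem consistent_nil : Consistent i d [] := fun σ _ _ _ h => by
  simpa using h.length_le

theorem consistent_cons {m : Letter} {ρ : List Letter} :
    Consistent i d (m :: ρ) ↔
      (∀ p xs Z, m = .pred p xs Z → i.pn p (xs.map d) = Z) ∧
        Consistent i (execLetter i d m) ρ := by
  constructor
  · intro h
    refine ⟨fun p xs Z hm => h [] p xs Z (by simp [hm]), fun σ p xs Z hσ => ?_⟩
    exact h (m :: σ) p xs Z (by simpa using hσ)
  · rintro ⟨hm, hρ⟩ (_ | ⟨a, σ⟩) p xs Z hσ
    · exact hm p xs Z (List.cons_prefix_cons.1 hσ).1.symm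
    · rw [List.cons_append, List.cons_prefix_cons] at hσ
      obtain ⟨rfl, hσ⟩ := hσ
      exact hρ σ p xs Z hσ

theorem consistent_append {α β : List Letter} :
    Consistent i d (α ++ β) ↔ Consistent i d α ∧ Consistent i (execWord i d α) β := by
  induction α generalizing d with
  | nil => simp [consistent_nil, execWord]
  | cons m α ih =>
    rw [List.cons_append, consistent_cons, consistent_cons, ih, and_assoc]
    rfl

/-- The predicate letters of a word with their arguments evaluated as Herbrand terms:
    the paper's consequences `p(t) = Z` of the word. -/
def predConstraints (s : Var → Tm) : List Letter → List (Pn × List Tm × Bool)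
  | [] => []
  | .pred p xs Z :: ρ => (p, xs.map s, Z) :: predConstraints s ρ
  | m :: ρ => predConstraints (execLetter hInterp s m) ρ

theorem consistent_eval_comp_iff {s : Var → Tm} {ρ : List Letter} :
    Consistent i (Tm.eval i d ∘ s) ρ ↔
      ∀ c ∈ predConstraints s ρ, i.pn c.1 (c.2.1.map (Tm.eval i d)) = c.2.2 := by
  induction ρ generalizing s with
  | nil => simp [consistent_nil, predConstraints]
  | cons m ρ ih =>
    rw [consistent_cons, ← eval_comp_execLetter, ih]
    cases m <;> simp [predConstraints, execLetter, List.map_map]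

theorem Consistent.of_predConstraints_subset {ρ ρ' : List Letter}
    (h : predConstraints natState ρ' ⊆ predConstraints natState ρ) (hρ : Consistent i d ρ) :
    Consistent i d ρ' := by
  rw [← Tm.eval_comp_natState i d, consistent_eval_comp_iff] at hρ ⊢
  exact fun c hc => hρ c (h hc)

end Consistency

def Diverge (τ₁ τ₂ : List Letter) : Prop :=
  ∃ α p xs Z, α ++ [.pred p xs Z] <+: τ₁ ∧ α ++ [.pred p xs (!Z)] <+: τ₂

theorem Diverge.append_right {τ₁ τ₂ : List Letter} (h : Diverge τ₁ τ₂) (σ₁ σ₂ : List Letter) :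
    Diverge (τ₁ ++ σ₁) (τ₂ ++ σ₂) :=
  let ⟨α, p, xs, Z, h₁, h₂⟩ := h
  ⟨α, p, xs, Z, h₁.trans (List.prefix_append _ _), h₂.trans (List.prefix_append _ _)⟩

theorem Diverge.append_left {τ₁ τ₂ : List Letter} (h : Diverge τ₁ τ₂) (σ : List Letter) :
    Diverge (σ ++ τ₁) (σ ++ τ₂) :=
  let ⟨α, p, xs, Z, h₁, h₂⟩ := h
  ⟨σ ++ α, p, xs, Z, by simpa using h₁, by simpa using h₂⟩

theorem eq_or_diverge_append {w₁ w₂ u₁ u₂ : List Letter}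
    (h₁ : w₁ = u₁ ∨ Diverge w₁ u₁) (h₂ : w₂ = u₂ ∨ Diverge w₂ u₂) :
    w₁ ++ w₂ = u₁ ++ u₂ ∨ Diverge (w₁ ++ w₂) (u₁ ++ u₂) := by
  rcases h₁ with rfl | h₁
  · exact h₂.imp (congrArg _) (·.append_left w₁)
  · exact .inr (h₁.append_right w₂ u₂)

theorem diverge_pred (p : Pn) (xs : List Var) (Z : Bool) (w u : List Letter) :
    Diverge (.pred p xs Z :: w) (.pred p xs (!Z) :: u) :=
  ⟨[], p, xs, Z, by simp, by simp⟩

theorem Paths.eq_or_diverge {S : Schema} {τ₁ τ₂ : List Letter} (h₁ : Paths S τ₁)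
    (h₂ : Paths S τ₂) : τ₁ = τ₂ ∨ Diverge τ₁ τ₂ := by
  induction h₁ generalizing τ₂ with
  | skip | label | assign => cases h₂; exact .inl rfl
  | seq _ _ ih₁ ih₂ => cases h₂ with
    | seq h h' => exact eq_or_diverge_append (ih₁ h) (ih₂ h')
  | iteTrue _ ih => cases h₂ with
    | iteTrue h => exact eq_or_diverge_append (w₁ := [_]) (.inl rfl) (ih h)
    | iteFalse => exact .inr (diverge_pred _ _ true _ _)
  | iteFalse _ ih => cases h₂ with
    | iteTrue => exact .inr (diverge_pred _ _ false _ _)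
    | iteFalse h => exact eq_or_diverge_append (w₁ := [_]) (.inl rfl) (ih h)
  | loopFalse => cases h₂ with
    | loopFalse => exact .inl rfl
    | loopTrue => exact .inr (diverge_pred _ _ false _ _)
  | loopTrue _ _ ih₁ ih₂ => cases h₂ with
    | loopFalse => exact .inr (diverge_pred _ _ true _ _)
    | loopTrue h h' =>
      exact eq_or_diverge_append (w₁ := [_]) (.inl rfl) (eq_or_diverge_append (ih₁ h) (ih₂ h'))

section Determinism

variable {D : Type} {i : Interp D} {d : Var → D}

theorem PrefixOfPi.prefix_of_paths {S : Schema} {ρ τ : List Letter}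
    (hρ : PrefixOfPi i d S ρ) (hτ : Paths S τ) (hτc : Consistent i d τ) : ρ <+: τ := by
  obtain ⟨⟨τ', hτ', hρτ'⟩, hρc⟩ := hρ
  rcases hτ'.eq_or_diverge hτ with rfl | ⟨α, p, xs, Z, h₁, h₂⟩
  · exact hρτ'
  by_cases hlen : ρ.length ≤ α.length
  · exact (List.prefix_of_prefix_length_le hρτ' ((List.prefix_append _ _).trans h₁) hlen).trans
      ((List.prefix_append _ _).trans h₂)
  · have hαρ : α ++ [.pred p xs Z] <+: ρ :=
      List.prefix_of_prefix_length_le h₁ hρτ' (by simp only [List.length_append, List.length_singleton]; omega)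
    have := (hρc α p xs Z hαρ).symm.trans (hτc α p xs (!Z) h₂)
    simp at this

end Determinism

section Run

variable {D : Type} (i : Interp D)

/-- The path `π(S,i,d)` computed with a bound `n` on the nesting of recursive calls;
    `none` when the bound is too small. -/
def run : ℕ → (Var → D) → Schema → Option (List Letter)
  | 0, _, _ => none
  | _ + 1, _, .skip => some []
  | _ + 1, _, .label l => some [.lab l]
  | _ + 1, _, .assign y f xs => some [.asgn y f xs]
  | n + 1, d, .seq S₁ S₂ =>
    (run n d S₁).bind fun w => (run n (execWord i d w) S₂).map (w ++ ·)
  | n + 1, d, .ite p xs S₁ S₂ =>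
    let Z := i.pn p (xs.map d)
    (run n d (if Z then S₁ else S₂)).map (.pred p xs Z :: ·)
  | n + 1, d, .loop q xs T =>
    if i.pn q (xs.map d) then
      (run n d T).bind fun w =>
        (run n (execWord i d w) (.loop q xs T)).map (.pred q xs true :: w ++ ·)
    else some [.pred q xs false]

variable {i}

theorem paths_and_consistent_of_run {n : ℕ} {d : Var → D} {S : Schema} {τ : List Letter}
    (h : run i n d S = some τ) : Paths S τ ∧ Consistent i d τ := by
  induction n generalizing d S τ with
  | zero => simp [run] at h
  | succ n ih =>
    cases S with
    | skip => cases h; exact ⟨.skip, consistent_nil⟩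
    | label l => cases h; exact ⟨.label l, consistent_cons.2 ⟨by simp, consistent_nil⟩⟩
    | assign y f xs => cases h; exact ⟨.assign y f xs, consistent_cons.2 ⟨by simp, consistent_nil⟩⟩
    | seq S₁ S₂ =>
      simp only [run, Option.bind_eq_some_iff, Option.map_eq_some_iff] at h
      obtain ⟨w₁, h₁, w₂, h₂, rfl⟩ := h
      obtain ⟨hp₁, hc₁⟩ := ih h₁
      obtain ⟨hp₂, hc₂⟩ := ih h₂
      exact ⟨hp₁.seq hp₂, consistent_append.2 ⟨hc₁, hc₂⟩⟩
    | ite p xs S₁ S₂ =>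
      simp only [run, Option.map_eq_some_iff] at h
      obtain ⟨w, hw, rfl⟩ := h
      obtain ⟨hp, hc⟩ := ih hw
      refine ⟨?_, consistent_cons.2 ⟨by simp, hc⟩⟩
      cases hZ : i.pn p (xs.map d) <;> simp only [hZ] at hp ⊢
      exacts [.iteFalse hp, .iteTrue hp]
    | loop q xs T =>
      simp only [run] at h
      split_ifs at h with hq
      · simp only [Option.bind_eq_some_iff, Option.map_eq_some_iff] at h
        obtain ⟨w₁, h₁, w₂, h₂, rfl⟩ := h
        obtain ⟨hp₁, hc₁⟩ := ih h₁
        obtain ⟨hp₂, hc₂⟩ := ih h₂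
        exact ⟨.loopTrue hp₁ hp₂, consistent_cons.2 ⟨by simpa using hq,
          consistent_append.2 ⟨hc₁, hc₂⟩⟩⟩
      · cases h
        exact ⟨.loopFalse q xs T, consistent_cons.2 ⟨by simpa using hq, consistent_nil⟩⟩

theorem pathPrefix_of_run {n : ℕ} {d : Var → D} {S : Schema} {ρ σ : List Letter}
    (h : run i n d S = some (ρ ++ σ)) : PathPrefix S ρ :=
  ⟨_, (paths_and_consistent_of_run h).1, List.prefix_append _ _⟩

end Run

theorem Paths.sym_mem {S : Schema} {τ : List Letter} (h : Paths S τ) :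
    ∀ m ∈ τ, m.sym ∈ S.syms := by
  induction h with
  | skip => simp
  | label | assign | loopFalse => simp [Schema.syms, Letter.sym]
  | seq _ _ ih₁ ih₂ =>
    simp only [Schema.syms, List.mem_append]
    exact fun m hm => hm.imp (ih₁ m) (ih₂ m)
  | iteTrue _ ih =>
    simp only [Schema.syms, List.mem_cons, List.mem_append]
    rintro m (rfl | hm)
    exacts [.inl rfl, .inr (.inl (ih m hm))]
  | iteFalse _ ih =>
    simp only [Schema.syms, List.mem_cons, List.mem_append]
    rintro m (rfl | hm)
    exacts [.inl rfl, .inr (.inr (ih m hm))]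
  | loopTrue _ _ ih₁ ih₂ =>
    simp only [Schema.syms, List.mem_cons, List.mem_append] at ih₂ ⊢
    rintro m (rfl | hm | hm)
    exacts [.inl rfl, .inr (ih₁ m hm), ih₂ m hm]

theorem IsQuotient.syms_subset {T S : Schema} (h : IsQuotient T S) : T.syms ⊆ S.syms := by
  induction h with
  | skip => simp [Schema.syms]
  | refl => exact List.Subset.refl _
  | seq _ _ ih₁ ih₂ =>
    intro s hs
    simp only [Schema.syms, List.mem_append] at hs ⊢
    exact hs.imp (@ih₁ s) (@ih₂ s)
  | loop _ ih => exact List.cons_subset_cons _ ih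
  | ite _ _ ih₁ ih₂ =>
    intro s hs
    simp only [Schema.syms, List.mem_cons, List.mem_append] at hs ⊢
    exact hs.imp_right (Or.imp (@ih₁ s) (@ih₂ s))

def Schema.quotients : Schema → List Schema
  | .skip => [.skip]
  | .label l => [.skip, .label l]
  | .assign y f xs => [.skip, .assign y f xs]
  | .seq S₁ S₂ => .skip :: S₁.quotients.flatMap fun a => S₂.quotients.map (.seq a)
  | .ite p xs S₁ S₂ => .skip :: S₁.quotients.flatMap fun a => S₂.quotients.map (.ite p xs a)
  | .loop q xs T => .skip :: T.quotients.map (.loop q xs)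

theorem Schema.skip_mem_quotients (S : Schema) : Schema.skip ∈ S.quotients := by
  cases S <;> simp [Schema.quotients]

theorem Schema.self_mem_quotients (S : Schema) : S ∈ S.quotients := by
  induction S <;> simp_all [Schema.quotients]

theorem IsQuotient.mem_quotients {T S : Schema} (h : IsQuotient T S) : T ∈ S.quotients := by
  induction h with
  | skip S => exact S.skip_mem_quotients
  | refl S => exact S.self_mem_quotients
  | _ => simp_all [Schema.quotients]

theorem mem_fns_execWord {f : Fn} {x : Var} :
    ∀ {σ : List Letter} {s : Var → Tm}, f ∈ (execWord hInterp s σ x).fns →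
      (∃ u, f ∈ (s u).fns) ∨ ∃ y xs, Letter.asgn y f xs ∈ σ
  | [], _, h => .inl ⟨x, h⟩
  | m :: σ, s, h => by
    rcases mem_fns_execWord (σ := σ) h with ⟨u, hu⟩ | ⟨y, xs, hm⟩
    · cases m with
      | asgn y g xs =>
        by_cases hu' : u = y
        · subst hu'
          simp only [execLetter, Function.update_self, hInterp, Tm.fns_app, List.mem_cons,
            List.mem_flatMap, List.mem_map] at hu
          rcases hu with rfl | ⟨_, ⟨v, -, rfl⟩, hv⟩
          exacts [.inr ⟨u, xs, by simp⟩, .inl ⟨v, hv⟩]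
        · exact .inl ⟨u, by simpa [execLetter, hu'] using hu⟩
      | _ => exact .inl ⟨u, hu⟩
    · exact .inr ⟨y, xs, List.mem_cons_of_mem _ hm⟩

theorem exists_asgn_of_mem_fns_hExec {f : Fn} {x : Var} {σ : List Letter}
    (h : f ∈ (hExec σ x).fns) : ∃ y xs, Letter.asgn y f xs ∈ σ :=
  (mem_fns_execWord h).resolve_left fun ⟨_, hu⟩ => by simp [natState, Tm.fns] at hu

section Criteria

variable {D : Type} {i : Interp D} {d : Var → D} {S S' : Schema} {ρ : List Letter} {l : Label}

theorem isPFDS_of_predConstraints_subset {V : Set Var}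
    (hV : ∀ v ∈ V, hExec (proj S' ρ) v = hExec ρ v) (hpath : PathPrefix S' (proj S' ρ))
    (hcons : predConstraints natState (proj S' ρ) ⊆ predConstraints natState ρ) :
    IsPFDS S ρ l V S' :=
  ⟨hV, fun _ _ _ hρ => ⟨hpath, hρ.2.of_predConstraints_subset hcons⟩⟩

theorem not_isDS_of_fn_not_mem {v : Var} {f : Fn} (hρ : PrefixOfPi i d S ρ)
    (hf : f ∈ (hExec ρ v).fns) (hS' : Sym.fn f ∉ S'.syms) : ¬ IsDS S ρ l {v} S' := by
  intro h
  obtain ⟨ρ', ⟨⟨τ, hτ, hρ'τ⟩, -⟩, -, hv⟩ := h _ i d hρ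
  rw [← hv v rfl] at hf
  obtain ⟨y, xs, hm⟩ := exists_asgn_of_mem_fns_hExec hf
  exact hS' (hτ.sym_mem _ (hρ'τ.subset hm))

theorem not_isDS_of_run {v : Var} {n : ℕ} {τ : List Letter} (hρ : PrefixOfPi i d S ρ)
    (hrun : run i n d S' = some τ) (hτ : ∀ σ ∈ τ.inits, hExec σ v ≠ hExec ρ v) :
    ¬ IsDS S ρ l {v} S' := by
  intro h
  obtain ⟨ρ', hρ', -, hv⟩ := h _ i d hρ
  obtain ⟨hτp, hτc⟩ := paths_and_consistent_of_run hrun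
  exact hτ ρ' ((List.mem_inits _ _).2 (hρ'.prefix_of_paths hτp hτc)) (hv v rfl)

theorem minimalPFDSEnd_of_forall_quotients {T : Schema} {v : Var} (n : ℕ)
    (hρ : PrefixOfPi i d (S.seq (.label 0)) ρ) (hS : ∀ l, Sym.lab l ∉ S.syms)
    (hT : IsPFDSEnd S ρ {v} T)
    (hcheck : ∀ T' ∈ S.quotients, T'.syms ⊆ T.syms →
      T.syms ⊆ T'.syms ∨ (∃ f ∈ (hExec ρ v).fns, Sym.fn f ∉ T'.syms) ∨
        (run i n d (T'.seq (.label 0))).any fun τ => τ.inits.all fun σ => hExec σ v != hExec ρ v) :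
    MinimalPFDSEnd S ρ {v} T := by
  refine ⟨hT, fun T' hT' hlt => ?_⟩
  have hsub : T'.syms ⊆ T.syms := by
    intro s hs
    have hfp : ∀ l, s ≠ .lab l := by rintro l rfl; exact hS l (hT'.syms_subset hs)
    exact (hlt.1 ⟨hs, hfp⟩).1
  rcases hcheck T' hT'.mem_quotients hsub with hsup | ⟨f, hf, hfT'⟩ | hrun
  · exact (hlt.2 fun s hs => ⟨hsup hs.1, hs.2⟩).elim
  · exact not_isDS_of_fn_not_mem hρ hf (by simpa [Schema.syms] using hfT')
  · obtain ⟨τ, hτ, hall⟩ := (Option.any_eq_true _ _).1 hrun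
    exact not_isDS_of_run hρ hτ (by simpa using hall)

end Criteria

/-- Predicates on `v` read the number of passes through the body of `P` as the number of
    `J`'s in `v`; `t(x)` fails only on `g_bad()`. This interpretation follows `ρ`. -/
def fig4Interp : Interp Tm where
  fn := Tm.app
  pn
    | 0, [v] => v.fns.count 7 < 5
    | 1, [v] => v.fns.count 7 < 4
    | 2, [v] => v.fns.count 7 < 3
    | 3, [v] => v.fns.count 7 % 2 == 1
    | 4, [v] => 2 ≤ v.fns.count 7
    | 5, [x] => x != .app 2 []
    | _, _ => false

theorem fig4S_linear : fig4S.Linear := show fig4S.syms.Nodup by decide +kernel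

theorem run_fig4S : run fig4Interp 40 natState fig4S = some fig4Rho := by decide +kernel

theorem fig4Rho_prefixOfPi :
    PrefixOfPi fig4Interp natState (fig4S.seq (.label 0)) fig4Rho :=
  have ⟨hp, hc⟩ := paths_and_consistent_of_run run_fig4S
  ⟨⟨_, hp.seq (.label 0), List.prefix_append _ _⟩, hc⟩

theorem fig4S_executable : Executable fig4S fig4Rho :=
  have ⟨hp, hc⟩ := paths_and_consistent_of_run run_fig4S
  ⟨Tm, fig4Interp, natState, ⟨fig4Rho, hp, List.prefix_refl _⟩, hc⟩

theorem fig4S_label_not_mem (l : Label) : Sym.lab l ∉ fig4S.syms := by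
  simp [fig4S, fig4With, fig4Inner, fig4S1If, fig4S2If, fig4TIf, Schema.syms]

theorem isQuotient_fig4With {s₁ s₂ s₁' s₂' : Schema} (h₁ : IsQuotient s₁' s₁)
    (h₂ : IsQuotient s₂' s₂) : IsQuotient (fig4With s₁' s₂') (fig4With s₁ s₂) :=
  .loop (.seq (.ite (.seq (.refl _) (.seq h₁ (.seq h₂ (.refl _)))) (.refl _)) (.refl _))

/-- The deleted `x := gᵢ()` only feeds `t(x)`, whose argument then equals a value of `x`
    at which `t` was already evaluated on an earlier pass. -/
theorem minimalPFDSEnd_fig4Sa_fig4Sb :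
    MinimalPFDSEnd fig4S fig4Rho {0} fig4Sa ∧ MinimalPFDSEnd fig4S fig4Rho {0} fig4Sb := by
  constructor <;>
  refine minimalPFDSEnd_of_forall_quotients 40 fig4Rho_prefixOfPi fig4S_label_not_mem
    (isPFDS_of_predConstraints_subset (by rintro v rfl; decide +kernel)
      (pathPrefix_of_run (n := 40) (i := fig4Interp) (d := natState) (σ := [.lab 0])
        (by decide +kernel))
      (by decide +kernel))
    (by decide +kernel)

/-- there exist a linear schema S, a variable v and an executable
    terminating path ρ through S having two distinct minimal (ρ,{v})-path-faithful
    dynamic end slices (minimality w.r.t. inclusion of retained function and predicate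
    symbols, among (ρ,{v})-dynamic end slices); in particular, for the Figure 4 schema
    and the path ρ described there, the quotients S₁ (deleting the if guarded by s₂)
    and S₂ (deleting the if guarded by s₁) are distinct minimal (ρ,{v})-path-faithful
    dynamic end slices of S. -/
theorem statement_16 :
    (∃ (S : Schema) (v : Var) (ρ : List Letter) (S₁ S₂ : Schema),
      S.Linear ∧ Paths S ρ ∧ Executable S ρ ∧
      IsQuotient S₁ S ∧ IsQuotient S₂ S ∧ S₁ ≠ S₂ ∧
      MinimalPFDSEnd S ρ {v} S₁ ∧ MinimalPFDSEnd S ρ {v} S₂) ∧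
    (fig4S.Linear ∧ Paths fig4S fig4Rho ∧ Executable fig4S fig4Rho ∧
      IsQuotient fig4Sa fig4S ∧ IsQuotient fig4Sb fig4S ∧ fig4Sa ≠ fig4Sb ∧
      MinimalPFDSEnd fig4S fig4Rho {0} fig4Sa ∧
      MinimalPFDSEnd fig4S fig4Rho {0} fig4Sb) := by
  refine ⟨⟨fig4S, 0, fig4Rho, fig4Sa, fig4Sb, ?_⟩, ?_⟩ <;>
  exact ⟨fig4S_linear, (paths_and_consistent_of_run run_fig4S).1, fig4S_executable,
    isQuotient_fig4With (.refl _) (.skip _), isQuotient_fig4With (.skip _) (.refl _),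
    by decide, minimalPFDSEnd_fig4Sa_fig4Sb⟩

end SchemaSlicing
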